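/- arXiv:1608.01172 — 3 statements merged into one kernel-verified Lean document; each statement's English description precedes it below -/
import Mathlib

section
/- (Proposition 3, first-order convergence of the primal Gram matrices.) Let B* be an invertible n×n real matrix, P an n×n real matrix, and set B = (B*)^{-T}. For each sufficiently large positive integer w let M_w = w·((w·B* + P)^{-T}) (the inverse transpose of w·B* + P, scaled by w). Then w·(M_w·M_wᵀ − B·Bᵀ) converges, as w → ∞, to −B·(Pᵀ·B + Bᵀ·P)·Bᵀ (entrywise convergence). -/
/-!
Write `X_w = B*ᵀ + w⁻¹ Pᵀ`, so that `M_w = X_w⁻¹` and `w (X_w − B*ᵀ) = Pᵀ`. From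
`X⁻¹ − S⁻¹ = −X⁻¹ (X − S) S⁻¹` and the continuity of the inverse, the first-order term of
`M_w − B` is `−B Pᵀ B / w`; the product rule for `N ↦ N Nᵀ` then gives the first-order term
`−B Pᵀ B Bᵀ − B Bᵀ P Bᵀ` of the Gram matrix.
-/

open Filter Matrix Topology

theorem tendsto_of_tendsto_smul_sub {ι E : Type*} [AddCommGroup E] [Module ℝ E]
    [TopologicalSpace E] [IsTopologicalAddGroup E] [ContinuousSMul ℝ E]
    {l : Filter ι} {c : ι → ℝ} {f : ι → E} {a d : E}
    (hc : Tendsto c l atTop) (hd : Tendsto (fun i => c i • (f i - a)) l (𝓝 d)) :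
    Tendsto f l (𝓝 a) := by
  have hsmall : Tendsto (fun i => a + (c i)⁻¹ • (c i • (f i - a))) l (𝓝 (a + (0 : ℝ) • d)) :=
    tendsto_const_nhds.add ((tendsto_inv_atTop_zero.comp hc).smul hd)
  rw [zero_smul, add_zero] at hsmall
  refine hsmall.congr' ?_
  filter_upwards [hc.eventually_gt_atTop 0] with i hi
  rw [smul_smul, inv_mul_cancel₀ hi.ne', one_smul, add_sub_cancel]

namespace Matrix

theorem inv_smul_of_ne_zero {n K : Type*} [Fintype n] [DecidableEq n] [Field K] {k : K}
    (hk : k ≠ 0) (A : Matrix n n K) : (k • A)⁻¹ = k⁻¹ • A⁻¹ := by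
  by_cases hA : IsUnit A.det
  · simpa only [Units.smul_def, Units.val_inv_eq_inv_val, Units.val_mk0] using
      inv_smul' A (Units.mk0 k hk) hA
  · have hkA : ¬IsUnit (k • A).det := fun h => hA (by
      rw [det_smul] at h
      exact (IsUnit.mul_iff.mp h).2)
    rw [nonsing_inv_apply_not_isUnit _ hA, nonsing_inv_apply_not_isUnit _ hkA, smul_zero]

theorem tendsto_smul_inv_sub_inv {ι n K : Type*} [Fintype n] [DecidableEq n] [NormedField K]
    {l : Filter ι} {c : ι → K}
    {X : ι → Matrix n n K} {S D : Matrix n n K} (hS : IsUnit S.det)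
    (hX : Tendsto X l (𝓝 S)) (hD : Tendsto (fun i => c i • (X i - S)) l (𝓝 D)) :
    Tendsto (fun i => c i • ((X i)⁻¹ - S⁻¹)) l (𝓝 (-(S⁻¹ * D * S⁻¹))) := by
  have hinv : Tendsto (fun i => (X i)⁻¹) l (𝓝 S⁻¹) := by
    refine (continuousAt_matrix_inv S ?_).tendsto.comp hX
    rw [Ring.inverse_eq_inv']
    exact continuousAt_inv₀ hS.ne_zero
  refine ((hinv.mul hD).mul tendsto_const_nhds).neg.congr' ?_
  have hdet : ∀ᶠ i in l, (X i).det ≠ 0 :=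
    ((continuous_id.matrix_det.tendsto S).comp hX).eventually_ne hS.ne_zero
  filter_upwards [hdet] with i hi
  have hunit : IsUnit (X i) ↔ IsUnit S := by
    simp only [isUnit_iff_isUnit_det, isUnit_iff_ne_zero.mpr hi, hS]
  rw [inv_sub_inv hunit, ← neg_sub (X i), Matrix.mul_neg, Matrix.neg_mul, smul_neg,
    Matrix.mul_smul, Matrix.smul_mul]

theorem tendsto_smul_mul_transpose_sub {ι n R : Type*} [Fintype n] [CommRing R]
    [TopologicalSpace R] [IsTopologicalRing R] {l : Filter ι} {c : ι → R}
    {N : ι → Matrix n n R} {N₀ D : Matrix n n R}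
    (hN : Tendsto N l (𝓝 N₀)) (hD : Tendsto (fun i => c i • (N i - N₀)) l (𝓝 D)) :
    Tendsto (fun i => c i • (N i * (N i)ᵀ - N₀ * N₀ᵀ)) l (𝓝 (D * N₀ᵀ + N₀ * Dᵀ)) := by
  have hNT : Tendsto (fun i => (N i)ᵀ) l (𝓝 N₀ᵀ) :=
    (continuous_id.matrix_transpose.tendsto N₀).comp hN
  have hDT : Tendsto (fun i => (c i • (N i - N₀))ᵀ) l (𝓝 Dᵀ) :=
    (continuous_id.matrix_transpose.tendsto D).comp hD
  refine ((hD.mul hNT).add (tendsto_const_nhds.mul hDT)).congr fun i => ?_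
  simp only [transpose_smul, transpose_sub, Matrix.smul_mul, Matrix.mul_smul, Matrix.sub_mul,
    Matrix.mul_sub, ← smul_add]
  abel_nf

end Matrix

/-- Proposition 3 (first-order convergence of the primal Gram matrices): for an
invertible real `n × n` matrix `B*` and arbitrary `P`, with `B = (B*)⁻ᵀ` and
`M_w = w • ((w•B* + P)⁻ᵀ)`, the matrices `w • (M_w M_wᵀ − BBᵀ)` converge
entrywise to `−B (PᵀB + BᵀP) Bᵀ` as the positive integer `w → ∞`. -/
theorem primal_gram_first_order (n : ℕ)
    (Bstar P : Matrix (Fin n) (Fin n) ℝ) (hB : IsUnit Bstar.det)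
    (B : Matrix (Fin n) (Fin n) ℝ) (hBdef : B = (Bstar⁻¹)ᵀ)
    (M : ℕ → Matrix (Fin n) (Fin n) ℝ)
    (hM : ∀ w : ℕ, M w = (w : ℝ) • (((w : ℝ) • Bstar + P)⁻¹)ᵀ) :
    Tendsto (fun w : ℕ => (w : ℝ) • (M w * (M w)ᵀ - B * Bᵀ)) atTop
      (nhds (-(B * (Pᵀ * B + Bᵀ * P) * Bᵀ))) := by
  set X : ℕ → Matrix (Fin n) (Fin n) ℝ := fun w => Bstarᵀ + (w : ℝ)⁻¹ • Pᵀ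
  have hw : ∀ᶠ w : ℕ in atTop, (w : ℝ) ≠ 0 := by
    filter_upwards [eventually_ge_atTop 1] with w hw using by positivity
  have hc : Tendsto (fun w : ℕ => (w : ℝ)) atTop atTop := tendsto_natCast_atTop_atTop
  have hXD : Tendsto (fun w : ℕ => (w : ℝ) • (X w - Bstarᵀ)) atTop (𝓝 Pᵀ) := by
    refine tendsto_const_nhds.congr' ?_
    filter_upwards [hw] with w hw
    rw [add_sub_cancel_left, smul_smul, mul_inv_cancel₀ hw, one_smul]
  have hMX : ∀ᶠ w in atTop, M w = (X w)⁻¹ := by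
    filter_upwards [hw] with w hw
    have hscale : (w : ℝ) • Bstarᵀ + Pᵀ = (w : ℝ) • X w := by
      rw [smul_add, smul_smul, mul_inv_cancel₀ hw, one_smul]
    rw [hM, transpose_nonsing_inv, transpose_add, transpose_smul, hscale,
      inv_smul_of_ne_zero hw, smul_smul, mul_inv_cancel₀ hw, one_smul]
  have hMD : Tendsto (fun w : ℕ => (w : ℝ) • (M w - B)) atTop (𝓝 (-(B * Pᵀ * B))) := by
    rw [hBdef, transpose_nonsing_inv]
    refine (tendsto_smul_inv_sub_inv (by rwa [det_transpose])
      (tendsto_of_tendsto_smul_sub hc hXD) hXD).congr' ?_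
    filter_upwards [hMX] with w hw
    rw [hw]
  convert tendsto_smul_mul_transpose_sub (tendsto_of_tendsto_smul_sub hc hMD) hMD using 2
  simp only [transpose_neg, transpose_mul, transpose_transpose, Matrix.neg_mul, Matrix.mul_neg,
    Matrix.mul_add, Matrix.add_mul, Matrix.mul_assoc, neg_add]
end

section
/- (Proposition 3, quadratic convergence of the primal Gram matrices.) Let B* be an invertible n×n real matrix and P an n×n real matrix with Pᵀ·B + Bᵀ·P = 0, where B = (B*)^{-T}. For each sufficiently large positive integer w let M_w = w·((w·B* + P)^{-T}). Then w²·(M_w·M_wᵀ − B·Bᵀ) converges, as w → ∞, to B·(Pᵀ·B)·(Pᵀ·B)·Bᵀ (entrywise convergence); in particular w·(M_w·M_wᵀ − B·Bᵀ) → 0, i.e., the convergence is quadratic. -/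
/-!
Write `L = PᵀB`; the hypothesis says `L` is skew-symmetric. Factoring `w • B* + P = w • B* (1 + w⁻¹ Lᵀ)`
gives `M_w = B (1 + w⁻¹ L)⁻¹` exactly, and skew-symmetry collapses the Gram matrix to
`M_w M_wᵀ = B (1 - w⁻² L²)⁻¹ Bᵀ`: the first-order terms cancel. The claim is then the first-order
expansion `s⁻¹ ((1 - s N)⁻¹ - 1) → N` of the matrix inverse at `1`, applied with `s = w⁻²`, `N = L²`.
-/

open Filter Matrix Topology

namespace Matrix

variable {n : Type*} [Fintype n] [DecidableEq n]

theorem inv_smul_of_ne_zero_s16 {K : Type*} [Field K] (X : Matrix n n K) {c : K} (hc : c ≠ 0) :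
    (c • X)⁻¹ = c⁻¹ • X⁻¹ := by
  have hscalar : (c • (1 : Matrix n n K))⁻¹ = c⁻¹ • 1 :=
    inv_eq_left_inv (by rw [smul_mul_smul_comm, inv_mul_cancel₀ hc, mul_one, one_smul])
  rw [← smul_one_mul, mul_inv_rev, hscalar, mul_smul_comm, mul_one]

theorem smul_transpose_inv_smul_add {K : Type*} [Field K] {A : Matrix n n K}
    (hA : IsUnit A.det) (P : Matrix n n K) {c : K} (hc : c ≠ 0) :
    c • ((c • A + P)⁻¹)ᵀ = (A⁻¹)ᵀ * (1 + c⁻¹ • (Pᵀ * (A⁻¹)ᵀ))⁻¹ := by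
  have hfactor : c • A + P = c • (A * (1 + c⁻¹ • (A⁻¹ * P))) := by
    rw [mul_add, mul_one, mul_smul_comm, ← Matrix.mul_assoc, mul_nonsing_inv A hA, Matrix.one_mul,
      smul_add, smul_smul, mul_inv_cancel₀ hc, one_smul]
  rw [hfactor, inv_smul_of_ne_zero_s16 _ hc, mul_inv_rev, transpose_smul, smul_smul,
    mul_inv_cancel₀ hc, one_smul, transpose_mul, transpose_nonsing_inv, transpose_nonsing_inv,
    transpose_add, transpose_one, transpose_smul, transpose_mul, transpose_nonsing_inv]

theorem inv_one_add_smul_mul_transpose {R : Type*} [CommRing R] {L : Matrix n n R}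
    (hL : Lᵀ = -L) (t : R) :
    (1 + t • L)⁻¹ * ((1 + t • L)⁻¹)ᵀ = (1 - t ^ 2 • (L * L))⁻¹ := by
  rw [transpose_nonsing_inv, transpose_add, transpose_one, transpose_smul, hL, ← mul_inv_rev]
  congr 1
  simp only [smul_neg, mul_add, add_mul, mul_one, one_mul, neg_mul, smul_mul_smul_comm]
  rw [sq]; abel

theorem inv_one_sub_smul_sub_one {R : Type*} [CommRing R] {N : Matrix n n R} {s : R}
    (h : IsUnit (1 - s • N).det) :
    (1 - s • N)⁻¹ - 1 = s • ((1 - s • N)⁻¹ * N) := by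
  calc (1 - s • N)⁻¹ - 1 = (1 - s • N)⁻¹ * (1 - (1 - s • N)) := by
        rw [mul_sub, mul_one, nonsing_inv_mul _ h]
    _ = s • ((1 - s • N)⁻¹ * N) := by rw [sub_sub_cancel, mul_smul_comm]

variable {𝕜 : Type*} [Field 𝕜] [TopologicalSpace 𝕜] [IsTopologicalRing 𝕜] [ContinuousInv₀ 𝕜]

theorem tendsto_inv_one_sub_smul (N : Matrix n n 𝕜) :
    Tendsto (fun s : 𝕜 => (1 - s • N)⁻¹) (𝓝 0) (𝓝 1) := by
  have hinv : ContinuousAt Inv.inv (1 : Matrix n n 𝕜) := by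
    refine continuousAt_matrix_inv _ ?_
    rw [det_one, Ring.inverse_eq_inv']
    exact continuousAt_inv₀ one_ne_zero
  have hcont : Continuous (fun s : 𝕜 => 1 - s • N) := by fun_prop
  simpa only [Function.comp_def, inv_one] using hinv.tendsto.comp (by simpa using hcont.tendsto 0)

theorem tendsto_inv_smul_inv_one_sub_smul_sub_one [T1Space 𝕜] (N : Matrix n n 𝕜) :
    Tendsto (fun s : 𝕜 => s⁻¹ • ((1 - s • N)⁻¹ - 1)) (𝓝[≠] 0) (𝓝 N) := by
  have hlim : Tendsto (fun s : 𝕜 => (1 - s • N)⁻¹ * N) (𝓝[≠] 0) (𝓝 N) := by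
    simpa using ((tendsto_inv_one_sub_smul N).mul_const N).mono_left nhdsWithin_le_nhds
  have hdet : ∀ᶠ s : 𝕜 in 𝓝 0, IsUnit (1 - s • N).det := by
    have hcont : Continuous (fun s : 𝕜 => (1 - s • N).det) := by fun_prop
    filter_upwards [hcont.continuousAt.eventually_ne (by simp : (1 - (0 : 𝕜) • N).det ≠ 0)]
      with s hs using isUnit_iff_ne_zero.mpr hs
  refine hlim.congr' ?_
  filter_upwards [self_mem_nhdsWithin, nhdsWithin_le_nhds hdet] with s hs hunit
  rw [inv_one_sub_smul_sub_one hunit, smul_smul, inv_mul_cancel₀ hs, one_smul]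

end Matrix

theorem tendsto_natCast_smul_zero_of_tendsto_sq_smul {E : Type*} [AddCommGroup E] [Module ℝ E]
    [TopologicalSpace E] [ContinuousSMul ℝ E] {f : ℕ → E} {a : E}
    (h : Tendsto (fun w : ℕ => (w : ℝ) ^ 2 • f w) atTop (𝓝 a)) :
    Tendsto (fun w : ℕ => (w : ℝ) • f w) atTop (𝓝 0) := by
  have h0 := (tendsto_inv_atTop_zero.comp (tendsto_natCast_atTop_atTop (R := ℝ))).smul h
  rw [zero_smul] at h0
  refine h0.congr' ?_
  filter_upwards [eventually_ne_atTop 0] with w hw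
  have hw' : (w : ℝ) ≠ 0 := Nat.cast_ne_zero.mpr hw
  simp only [Function.comp_apply, smul_smul]
  rw [sq, ← mul_assoc, inv_mul_cancel₀ hw', one_mul]

theorem tendsto_inv_natCast_sq_nhdsNE_zero :
    Tendsto (fun w : ℕ => ((w : ℝ)⁻¹) ^ 2) atTop (𝓝[≠] 0) := by
  refine tendsto_nhdsWithin_iff.mpr ⟨?_, ?_⟩
  · simpa using ((tendsto_inv_atTop_zero.comp (tendsto_natCast_atTop_atTop (R := ℝ))).pow 2)
  · filter_upwards [eventually_ne_atTop 0] with w hw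
    simpa using hw

/-- Proposition 3 (quadratic convergence of the primal Gram matrices): for an
invertible real `n × n` matrix `B*` and `P` with `PᵀB + BᵀP = 0`, where
`B = (B*)⁻ᵀ`, setting `M_w = w • ((w•B* + P)⁻ᵀ)`, the matrices
`w² • (M_w M_wᵀ − BBᵀ)` converge entrywise to `B (PᵀB)(PᵀB) Bᵀ` as the
positive integer `w → ∞`; in particular `w • (M_w M_wᵀ − BBᵀ) → 0`. -/
theorem primal_gram_quadratic (n : ℕ)
    (Bstar P : Matrix (Fin n) (Fin n) ℝ) (hB : IsUnit Bstar.det)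
    (B : Matrix (Fin n) (Fin n) ℝ) (hBdef : B = (Bstar⁻¹)ᵀ)
    (hP : Pᵀ * B + Bᵀ * P = 0)
    (M : ℕ → Matrix (Fin n) (Fin n) ℝ)
    (hM : ∀ w : ℕ, M w = (w : ℝ) • (((w : ℝ) • Bstar + P)⁻¹)ᵀ) :
    Tendsto (fun w : ℕ => ((w : ℝ) ^ 2) • (M w * (M w)ᵀ - B * Bᵀ)) atTop
      (nhds (B * (Pᵀ * B) * (Pᵀ * B) * Bᵀ)) ∧
    Tendsto (fun w : ℕ => (w : ℝ) • (M w * (M w)ᵀ - B * Bᵀ)) atTop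
      (nhds 0) := by
  set L := Pᵀ * B
  have hskew : Lᵀ = -L := by
    rw [transpose_mul, transpose_transpose]
    exact eq_neg_of_add_eq_zero_right hP
  have hgram : ∀ w : ℕ, w ≠ 0 → (w : ℝ) ^ 2 • (M w * (M w)ᵀ - B * Bᵀ) =
      B * ((((w : ℝ)⁻¹) ^ 2)⁻¹ • ((1 - ((w : ℝ)⁻¹) ^ 2 • (L * L))⁻¹ - 1)) * Bᵀ := by
    intro w hw
    have hMw : M w = B * (1 + (w : ℝ)⁻¹ • L)⁻¹ := by
      rw [hM, smul_transpose_inv_smul_add hB P (Nat.cast_ne_zero.mpr hw), ← hBdef]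
    rw [hMw, transpose_mul, Matrix.mul_assoc, ← Matrix.mul_assoc _ _ Bᵀ,
      inv_one_add_smul_mul_transpose hskew, inv_pow, inv_inv]
    simp only [Matrix.mul_sub, Matrix.sub_mul, Matrix.mul_one, Matrix.mul_smul, Matrix.smul_mul,
      Matrix.mul_assoc, smul_sub]
  have hlim := ((tendsto_inv_smul_inv_one_sub_smul_sub_one (L * L)).comp
    tendsto_inv_natCast_sq_nhdsNE_zero).const_mul B |>.mul_const Bᵀ
  have hquad : Tendsto (fun w : ℕ => ((w : ℝ) ^ 2) • (M w * (M w)ᵀ - B * Bᵀ)) atTop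
      (nhds (B * L * L * Bᵀ)) := by
    rw [Matrix.mul_assoc B L L]
    refine hlim.congr' ?_
    filter_upwards [eventually_ne_atTop 0] with w hw
    exact (hgram w hw).symm
  exact ⟨hquad, tendsto_natCast_smul_zero_of_tendsto_sq_smul hquad⟩
end

section
/- (Cyclic quotient for the cyclic perturbation.) Let n ≥ 1, let A be an n×n lower-triangular integer matrix (A_{i,j} = 0 whenever j > i), let w be an integer, and let C_n be the n×n integer matrix with entries c_{i,j} = 1 if j = i+1 and c_{i,j} = 0 otherwise. Let Λ' be the ℤ-span of the rows of w·A + C_n inside ℤⁿ. Then the quotient group ℤⁿ / Λ' is a cyclic group, generated by the class of the first standard basis vector e₁. -/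
/-!
Modulo `Λ'`, the row `i` of `w • A + Cₙ` says that `e_{i+1} ≡ -w • Aᵢ`, and since `A` is lower
triangular `Aᵢ` only involves `e₀, …, eᵢ`. By induction every `eᵢ`, hence all of `ℤⁿ`, lies in
`ℤ ∙ e₀ + Λ'`.
-/

section

variable {R : Type*} [Ring R]

theorem Submodule.Quotient.exists_eq_smul_mk_of_sup_eq_top {M : Type*} [AddCommGroup M]
    [Module R M] {p : Submodule R M} {v : M} (h : (R ∙ v) ⊔ p = ⊤) (x : M ⧸ p) :
    ∃ k : R, x = k • Submodule.Quotient.mk v := by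
  obtain ⟨y, rfl⟩ := Submodule.Quotient.mk_surjective p x
  obtain ⟨_, hz, z, hp, rfl⟩ := Submodule.mem_sup.mp (h ▸ Submodule.mem_top : y ∈ (R ∙ v) ⊔ p)
  obtain ⟨k, rfl⟩ := Submodule.mem_span_singleton.mp hz
  refine ⟨k, ?_⟩
  rw [Submodule.Quotient.mk_add, (Submodule.Quotient.mk_eq_zero p).mpr hp, add_zero,
    Submodule.Quotient.mk_smul]

theorem Pi.single_mem_of_mem_of_isUnit {ι : Type*} [Fintype ι] [LinearOrder ι]
    {N : Submodule R (ι → R)} {v : ι → R} {k : ι} (hv : v ∈ N) (hvk : IsUnit (v k))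
    (hv_gt : ∀ j, k < j → v j = 0) (hlt : ∀ j < k, Pi.single j 1 ∈ N) :
    Pi.single k 1 ∈ N := by
  rw [← N.smul_mem_iff_of_isUnit hvk]
  have hsplit : v k • Pi.single k 1 = v - ∑ j ∈ Finset.univ.erase k, v j • Pi.single j 1 := by
    rw [eq_sub_iff_add_eq]
    exact (Finset.add_sum_erase _ _ (Finset.mem_univ k)).trans (pi_eq_sum_univ' v).symm
  rw [hsplit]
  refine N.sub_mem hv (N.sum_mem fun j hj => ?_)
  rcases lt_or_gt_of_ne (Finset.ne_of_mem_erase hj) with hjk | hkj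
  · exact N.smul_mem _ (hlt j hjk)
  · rw [hv_gt j hkj, zero_smul]
    exact N.zero_mem

theorem Matrix.span_single_zero_sup_span_rows_eq_top {n : ℕ}
    (M : Matrix (Fin (n + 1)) (Fin (n + 1)) R)
    (hM : ∀ (i : Fin n) j, i.succ < j → M i.castSucc j = 0)
    (hu : ∀ i : Fin n, IsUnit (M i.castSucc i.succ)) :
    (R ∙ Pi.single 0 1) ⊔ Submodule.span R (Set.range M) = ⊤ := by
  rw [eq_top_iff, ← (Pi.basisFun R _).span_eq, Submodule.span_le]
  rintro _ ⟨j, rfl⟩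
  rw [Pi.basisFun_apply]
  induction j using WellFoundedLT.induction with
  | _ j ih =>
    cases j using Fin.cases with
    | zero => exact Submodule.mem_sup_left (Submodule.mem_span_singleton_self _)
    | succ i =>
      exact Pi.single_mem_of_mem_of_isUnit
        (Submodule.mem_sup_right (Submodule.subset_span ⟨i.castSucc, rfl⟩)) (hu i) (hM i) ih

end

/-- Cyclic quotient for the cyclic perturbation: if `A` is a lower-triangular
`n × n` integer matrix (`n ≥ 1`), `w` an integer, and `Cₙ` the matrix with
entries `1` on the first superdiagonal and `0` elsewhere, then the quotient of
`ℤⁿ` by the ℤ-span `Λ'` of the rows of `w • A + Cₙ` is cyclic, generated by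
the class of the first standard basis vector `e₁`. -/
theorem cyclic_quotient_of_cyclic_perturbation (n : ℕ) (hn : 1 ≤ n)
    (A : Matrix (Fin n) (Fin n) ℤ) (hA : ∀ i j : Fin n, i < j → A i j = 0)
    (w : ℤ)
    (C : Matrix (Fin n) (Fin n) ℤ)
    (hC : ∀ i j : Fin n, C i j = if (j : ℕ) = (i : ℕ) + 1 then 1 else 0) :
    ∀ x : (Fin n → ℤ) ⧸
        Submodule.span ℤ (Set.range fun i : Fin n => (w • A + C) i),
      ∃ k : ℤ, x = k • Submodule.Quotient.mk
        (Pi.single (⟨0, by omega⟩ : Fin n) 1 : Fin n → ℤ) := by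
  obtain ⟨m, rfl⟩ : ∃ m, n = m + 1 := ⟨n - 1, by omega⟩
  have hentry : ∀ i j, (w • A + C) i j = w * A i j + C i j := fun _ _ => rfl
  refine Submodule.Quotient.exists_eq_smul_mk_of_sup_eq_top
    ((w • A + C).span_single_zero_sup_span_rows_eq_top (fun i j hij => ?_) fun i => ?_)
  · have hne : (j : ℕ) ≠ i + 1 := (Fin.lt_def.mp hij).ne'
    rw [hentry, hA _ _ (hij.trans' Fin.castSucc_lt_succ), hC]
    simp [hne]
  · rw [hentry, hA _ _ Fin.castSucc_lt_succ, hC, if_pos (by simp)]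
    simp
end
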